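/- arXiv:2404.17995 — 9 statements merged into one kernel-verified Lean document; each statement's English description precedes it below -/
import Mathlib

section
/- For any nontrivial finite group G, i(G) equals the maximum of m(G) and the maximum of i(M) over all maximal subgroups M of G. -/
/-- A finite subset of a group is irredundant if no element lies in the
subgroup generated by the remaining elements. -/
def Irredundant {G : Type*} [Group G] (s : Finset G) : Prop :=
  ∀ g ∈ s, g ∉ Subgroup.closure ((s : Set G) \ {g})

/-- `mRank G` : maximal size of an irredundant generating set of `G`. -/
noncomputable def mRank (G : Type*) [Group G] : ℕ :=
  sSup {n | ∃ s : Finset G, Irredundant s ∧ Subgroup.closure (s : Set G) = ⊤ ∧ s.card = n}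

/-- `iRank G` : maximal size of an irredundant subset of `G`. -/
noncomputable def iRank (G : Type*) [Group G] : ℕ :=
  sSup {n | ∃ s : Finset G, Irredundant s ∧ s.card = n}

/-- A family of subgroups is in general position. -/
def GenPos {G : Type*} [Group G] {ι : Type*} (H : ι → Subgroup G) : Prop :=
  ∀ I J : Finset ι, I ⊂ J → (⨅ j ∈ J, H j) < (⨅ i ∈ I, H i)

/-- Maximal size of a family of maximal subgroups in general position. -/
noncomputable def MaxDim (G : Type*) [Group G] : ℕ :=
  sSup {k | ∃ M : Fin k → Subgroup G, (∀ j, IsCoatom (M j)) ∧ GenPos M}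

lemma mem_closure_image_iff {G : Type*} [Group G] (M : Subgroup G) (A : Set M) (x : M) :
    (x : G) ∈ Subgroup.closure (((↑) : M → G) '' A) ↔ x ∈ Subgroup.closure A := by
  have h : ((↑) : M → G) '' A = M.subtype '' A := rfl
  rw [h, ← MonoidHom.map_closure M.subtype A, Subgroup.mem_map]
  constructor
  · rintro ⟨y, hy, hxy⟩
    have : y = x := Subtype.ext hxy
    rwa [this] at hy
  · intro hx; exact ⟨x, hx, rfl⟩

lemma irredundant_image_iff {G : Type*} [Group G] [DecidableEq G] (M : Subgroup G) (s : Finset M) :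
    Irredundant (s.image ((↑) : M → G)) ↔ Irredundant s := by
  have hinj : Function.Injective ((↑) : M → G) := Subtype.val_injective
  have hcoe : ((s.image ((↑) : M → G)) : Set G) = ((↑) : M → G) '' (s : Set M) :=
    Finset.coe_image
  have hdiff : ∀ x : M, (((s.image ((↑) : M → G)) : Set G)) \ {(x : G)}
      = ((↑) : M → G) '' ((s : Set M) \ {x}) := by
    intro x
    rw [hcoe, Set.image_diff hinj, Set.image_singleton]
  constructor
  · intro h x hx hmem
    have hx' : (x : G) ∈ s.image ((↑) : M → G) := Finset.mem_image_of_mem _ hx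
    apply h _ hx'
    rw [hdiff x]
    exact (mem_closure_image_iff M _ x).mpr hmem
  · intro h g hg hmem
    obtain ⟨x, hx, rfl⟩ := Finset.mem_image.mp hg
    apply h x hx
    rw [hdiff x] at hmem
    exact (mem_closure_image_iff M _ x).mp hmem

theorem stmt4 {G : Type*} [Group G] [Finite G] [Nontrivial G] :
    iRank G = max (mRank G) (sSup {n | ∃ M : Subgroup G, IsCoatom M ∧ n = iRank M}) := by
  classical
  haveI := Fintype.ofFinite G
  set B := Fintype.card G with hB
  -- boundedness of iRank-type sets
  have hbddG : ∀ n ∈ {n | ∃ s : Finset G, Irredundant s ∧ s.card = n}, n ≤ B := by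
    rintro n ⟨s, -, rfl⟩
    exact (Finset.card_le_card (Finset.subset_univ s)).trans_eq (by simp [hB])
  have hbddG' : BddAbove {n | ∃ s : Finset G, Irredundant s ∧ s.card = n} := ⟨B, hbddG⟩
  have hiRankM_le : ∀ M : Subgroup G, iRank M ≤ B := by
    intro M
    haveI := Fintype.ofFinite M
    apply csSup_le'
    rintro n ⟨t, -, rfl⟩
    calc t.card ≤ Fintype.card M := Finset.card_le_card (Finset.subset_univ t)
      _ ≤ B := Fintype.card_le_of_injective _ Subtype.val_injective
  -- iRank M ≤ iRank G  for any subgroup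
  have hMle : ∀ M : Subgroup G, iRank M ≤ iRank G := by
    intro M
    apply csSup_le'
    rintro n ⟨t, ht, rfl⟩
    have hinj : Function.Injective ((↑) : M → G) := Subtype.val_injective
    apply le_csSup hbddG'
    exact ⟨t.image ((↑) : M → G), (irredundant_image_iff M t).mpr ht,
      (Finset.card_image_of_injective t hinj)⟩
  -- mRank G ≤ iRank G
  have hmle : mRank G ≤ iRank G := by
    apply csSup_le'
    rintro n ⟨s, hs, -, rfl⟩
    exact le_csSup hbddG' ⟨s, hs, rfl⟩
  -- sup over coatoms ≤ iRank G
  have hsuple : sSup {n | ∃ M : Subgroup G, IsCoatom M ∧ n = iRank M} ≤ iRank G := by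
    apply csSup_le'
    rintro n ⟨M, -, rfl⟩
    exact hMle M
  refine le_antisymm ?_ (max_le hmle hsuple)
  -- Attain iRank G
  have hne : {n | ∃ s : Finset G, Irredundant s ∧ s.card = n}.Nonempty :=
    ⟨0, ∅, by intro g hg; simp at hg, rfl⟩
  obtain ⟨s, hs, hcard⟩ := Nat.sSup_mem hne hbddG'
  rw [show iRank G = s.card from hcard.symm]
  by_cases htop : Subgroup.closure (s : Set G) = ⊤
  · apply le_max_of_le_left
    have hbddm : BddAbove {n | ∃ s : Finset G, Irredundant s ∧ Subgroup.closure (s : Set G) = ⊤ ∧ s.card = n} := by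
      refine ⟨B, ?_⟩
      rintro n ⟨t, -, -, rfl⟩
      exact (Finset.card_le_card (Finset.subset_univ t)).trans_eq (by simp [hB])
    exact le_csSup hbddm ⟨s, hs, htop, rfl⟩
  · -- closure s is proper, contained in a coatom M
    obtain ⟨M, hM, hle⟩ := (eq_top_or_exists_le_coatom (Subgroup.closure (s : Set G))).resolve_left htop
    have hsub : (s : Set G) ⊆ M := fun x hx => hle (Subgroup.subset_closure hx)
    -- build t : Finset M
    set t : Finset M := s.attach.image (fun x => (⟨x.1, hsub x.2⟩ : M)) with hT
    have htinj : Function.Injective (fun x : {x // x ∈ s} => (⟨x.1, hsub x.2⟩ : M)) := by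
      intro a b hab
      simp only [Subtype.mk.injEq] at hab
      exact Subtype.ext hab
    have htcard : t.card = s.card := by
      rw [hT, Finset.card_image_of_injective _ htinj, Finset.card_attach]
    have htimage : t.image ((↑) : M → G) = s := by
      rw [hT, Finset.image_image]
      exact Finset.attach_image_val
    have ht : Irredundant t := by
      rw [← irredundant_image_iff M t, htimage]; exact hs
    have : s.card ≤ iRank M := by
      haveI := Fintype.ofFinite M
      rw [← htcard]
      refine le_csSup ⟨Fintype.card M, ?_⟩ ⟨t, ht, rfl⟩
      rintro n ⟨u, -, rfl⟩
      exact Finset.card_le_card (Finset.subset_univ u)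
    refine le_max_of_le_right (this.trans ?_)
    have hbdd2 : BddAbove {n | ∃ M : Subgroup G, IsCoatom M ∧ n = iRank M} := by
      refine ⟨B, ?_⟩
      rintro n ⟨N, -, rfl⟩
      exact hiRankM_le N
    exact le_csSup hbdd2 ⟨M, hM, rfl⟩
end

section
/- For any nontrivial finite group G, m(G) ≤ 1 + max{i(M) : M a maximal subgroup of G}. -/
/-!
Remove one element `g` from an irredundant generating set `s` of `G`. By irredundance, `s \ {g}`
generates a proper subgroup, hence lies in some maximal subgroup `M`; and it is still irredundant,
now as a subset of `M`. So `|s| - 1 ≤ i(M)`.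
-/

namespace Irredundant

variable {G : Type*} [Group G]

theorem mono {s t : Finset G} (hs : Irredundant s) (hts : t ⊆ s) : Irredundant t :=
  fun g hg hmem =>
    hs g (hts hg) (Subgroup.closure_mono (Set.sdiff_subset_sdiff_left (by exact_mod_cast hts)) hmem)

theorem notMem_closure_erase [DecidableEq G] {s : Finset G} (hs : Irredundant s) {g : G}
    (hg : g ∈ s) :
    g ∉ Subgroup.closure (s.erase g : Set G) := by
  simpa only [Finset.coe_erase] using hs g hg

theorem closure_erase_ne_top [DecidableEq G] {s : Finset G} (hs : Irredundant s) {g : G}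
    (hg : g ∈ s) :
    Subgroup.closure (s.erase g : Set G) ≠ ⊤ :=
  fun h => hs.notMem_closure_erase hg (h ▸ Subgroup.mem_top g)

theorem of_map {K : Type*} [Group K] {f : G →* K} (hf : Function.Injective f) {s : Finset G}
    (hs : Irredundant (s.map ⟨f, hf⟩)) : Irredundant s := by
  intro g hg hmem
  refine hs (f g) (Finset.mem_map_of_mem _ hg) ?_
  have hfg : f g ∈ (Subgroup.closure ((s : Set G) \ {g})).map f := Subgroup.mem_map_of_mem f hmem
  rw [MonoidHom.map_closure, Set.image_sdiff hf, Set.image_singleton] at hfg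
  simpa only [Finset.coe_map, Function.Embedding.coeFn_mk] using hfg

theorem card_le_iRank [Finite G] {s : Finset G} (hs : Irredundant s) : s.card ≤ iRank G := by
  have : Fintype G := Fintype.ofFinite G
  refine le_csSup ⟨Fintype.card G, ?_⟩ ⟨s, hs, rfl⟩
  rintro _ ⟨t, -, rfl⟩
  exact Finset.card_le_univ t

theorem card_le_iRank_subgroup {H : Subgroup G} [Finite H] {s : Finset G} (hs : Irredundant s)
    (hsH : (s : Set G) ⊆ H) : s.card ≤ iRank H := by
  classical
  set t : Finset H := s.preimage H.subtype (H.subtype_injective.injOn)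
  have hts : t.map ⟨H.subtype, H.subtype_injective⟩ = s := by
    ext x
    simpa [t] using fun hx => hsH hx
  rw [← hts] at hs
  rw [← hts, Finset.card_map]
  exact (hs.of_map H.subtype_injective).card_le_iRank

end Irredundant

theorem iRank_le_natCard (G : Type*) [Group G] [Finite G] : iRank G ≤ Nat.card G := by
  have : Fintype G := Fintype.ofFinite G
  refine csSup_le' ?_
  rintro _ ⟨s, -, rfl⟩
  simpa only [Nat.card_eq_fintype_card] using Finset.card_le_univ s

theorem exists_isCoatom_card_le_iRank_add_one {G : Type*} [Group G] [Finite G] [Nontrivial G]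
    {s : Finset G} (hs : Irredundant s) (hgen : Subgroup.closure (s : Set G) = ⊤) :
    ∃ M : Subgroup G, IsCoatom M ∧ s.card ≤ iRank M + 1 := by
  classical
  obtain ⟨g, hg⟩ : s.Nonempty := by
    rw [Finset.nonempty_iff_ne_empty]
    rintro rfl
    simp at hgen
  obtain ⟨M, hM, hle⟩ := (IsCoatomic.eq_top_or_exists_le_coatom _).resolve_left
    (hs.closure_erase_ne_top hg)
  have hcard := (hs.mono (s.erase_subset g)).card_le_iRank_subgroup
    (Subgroup.subset_closure.trans hle)
  exact ⟨M, hM, by rw [Finset.card_erase_of_mem hg] at hcard; omega⟩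

theorem stmt5 {G : Type*} [Group G] [Finite G] [Nontrivial G] :
    mRank G ≤ 1 + sSup {n | ∃ M : Subgroup G, IsCoatom M ∧ n = iRank M} := by
  have hbdd : BddAbove {n | ∃ M : Subgroup G, IsCoatom M ∧ n = iRank M} := by
    refine ⟨Nat.card G, ?_⟩
    rintro _ ⟨M, -, rfl⟩
    exact (iRank_le_natCard M).trans M.card_le_card_group
  refine csSup_le' ?_
  rintro _ ⟨s, hs, hgen, rfl⟩
  obtain ⟨M, hM, hcard⟩ := exists_isCoatom_card_le_iRank_add_one hs hgen
  have hM_le : iRank M ≤ sSup {n | ∃ M : Subgroup G, IsCoatom M ∧ n = iRank M} :=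
    le_csSup hbdd ⟨M, hM, rfl⟩
  omega
end

section
/- For finite groups G and H, m(G × H) = m(G) + m(H), where m denotes the maximal size of an irredundant generating set. -/
/-!
Let `s` be an irredundant generating set of `G × H`. Some `A ⊆ s` with `|A| ≤ m(G)` already has
first projections generating `G`. Multiplying each `b ∈ s \ A` by an element of `K = ⟨A⟩` with the
same first coordinate moves it into `1 × H`, and the second coordinates form a set `v` generating
`H` irredundantly modulo `C = K ∩ H` up to conjugation by `D = π₂ K` (`IsIrredundantGenModulo`).
Such a `v` has at most `m(H)` elements, by induction on `|H|` and then on `|v|`: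
* if `v` generates `H`, it is an irredundant generating set;
* if the `D`-conjugates of `v` generate `H`, then so do its `M`-conjugates for a proper `M ≤ D`,
  and `(v × 1) ∪ {(d, d) | d ∈ a}`, for `a` a maximal irredundant generating set of `M`, is an
  irredundant generating set of `H × M`; hence `|v| + m(M) ≤ m(H × M) ≤ m(H) + m(M)`;
* otherwise `v` grows by an element of `C` outside a maximal normal subgroup `N` containing those
  conjugates, while `C` shrinks to `C ∩ N`.
The reverse inequality comes from the union of maximal irredundant generating sets of `G × 1` and
`1 × H`.
-/

open Subgroup

theorem Finset.card_le_nat_card {α : Type*} [Finite α] (s : Finset α) : s.card ≤ Nat.card α :=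
  Set.ncard_coe_finset s ▸ Set.ncard_le_card _

section Irredundant

variable {G : Type*} [Group G]

theorem Irredundant.one_notMem {s : Finset G} (hs : Irredundant s) : (1 : G) ∉ s :=
  fun h => hs 1 h (one_mem _)

theorem exists_irredundant_subset_of_closure_eq_top {s : Finset G}
    (hs : closure (s : Set G) = ⊤) :
    ∃ t ⊆ s, Irredundant t ∧ closure (t : Set G) = ⊤ := by
  classical
  obtain ⟨t, hts, hmin⟩ :=
    exists_minimal_le_of_wellFoundedLT (fun t : Finset G => closure (t : Set G) = ⊤) s hs
  refine ⟨t, hts, fun g hg hmem => ?_, hmin.prop⟩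
  have hclosure : closure ((t.erase g : Finset G) : Set G) = ⊤ := by
    rw [Finset.coe_erase, eq_top_iff, ← hmin.prop, closure_le]
    intro x hx
    by_cases hxg : x = g
    · exact hxg ▸ hmem
    · exact subset_closure ⟨hx, hxg⟩
  exact (Finset.erase_ssubset hg).ne (hmin.eq_of_le hclosure (Finset.erase_subset g t))

theorem bddAbove_card_irredundant_generating [Finite G] :
    BddAbove {n | ∃ s : Finset G, Irredundant s ∧ closure (s : Set G) = ⊤ ∧ s.card = n} :=
  ⟨Nat.card G, by rintro _ ⟨t, -, -, rfl⟩; exact t.card_le_nat_card⟩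

theorem card_le_mRank [Finite G] {s : Finset G} (hs : Irredundant s)
    (hgen : closure (s : Set G) = ⊤) : s.card ≤ mRank G :=
  le_csSup bddAbove_card_irredundant_generating ⟨s, hs, hgen, rfl⟩

theorem exists_irredundant_card_eq_mRank [Finite G] :
    ∃ s : Finset G, Irredundant s ∧ closure (s : Set G) = ⊤ ∧ s.card = mRank G := by
  refine Nat.sSup_mem (s := {n | ∃ s : Finset G, Irredundant s ∧ closure (s : Set G) = ⊤ ∧
    s.card = n}) ?_ bddAbove_card_irredundant_generating
  have := Fintype.ofFinite G
  obtain ⟨t, -, ht, hgen⟩ := exists_irredundant_subset_of_closure_eq_top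
    (s := (Finset.univ : Finset G)) (by simp)
  exact ⟨t.card, t, ht, hgen, rfl⟩

theorem mRank_le [Finite G] {n : ℕ}
    (h : ∀ s : Finset G, Irredundant s → closure (s : Set G) = ⊤ → s.card ≤ n) :
    mRank G ≤ n := by
  obtain ⟨s, hs, hgen, hcard⟩ := exists_irredundant_card_eq_mRank (G := G)
  exact hcard ▸ h s hs hgen

theorem exists_subset_card_le_mRank {P : Type*} [Group P] [Finite G] (f : P →* G)
    {s : Finset P} (hs : closure (f '' s) = ⊤) :
    ∃ A ⊆ s, A.card ≤ mRank G ∧ closure (f '' A) = ⊤ := by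
  classical
  obtain ⟨t, hts, ht, htgen⟩ :=
    exists_irredundant_subset_of_closure_eq_top (s := s.image f) (by rwa [Finset.coe_image])
  have hpre : ∀ y ∈ s.image f, ∃ p ∈ s, f p = y := fun y hy => Finset.mem_image.1 hy
  choose! σ hσs hfσ using hpre
  refine ⟨t.image σ, fun p hp => ?_, ?_, ?_⟩
  · obtain ⟨y, hy, rfl⟩ := Finset.mem_image.1 hp
    exact hσs y (hts hy)
  · exact Finset.card_image_le.trans (card_le_mRank ht htgen)
  · rwa [Finset.coe_image, Set.image_image, Set.image_congr fun y hy => hfσ y (hts hy),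
      Set.image_id']

end Irredundant

section SubgroupLemmas

variable {G : Type*} [Group G] {A B D K N : Subgroup G}

theorem apply_mem_closure_image_of_closure_eq_top {P : Type*} [Group P] (f : G →* P)
    {S : Set G} (hS : closure S = ⊤) (x : G) : f x ∈ closure (f '' S) :=
  f.map_closure S ▸ mem_map_of_mem f (hS ▸ mem_top x)

theorem le_normalizer_sup (hA : D ≤ normalizer A) (hB : D ≤ normalizer B) :
    D ≤ normalizer (A ⊔ B : Subgroup G) := by
  intro d hd
  rw [mem_normalizer_iff_map_conj_eq, Subgroup.map_sup, mem_normalizer_iff_map_conj_eq.1 (hA hd),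
    mem_normalizer_iff_map_conj_eq.1 (hB hd)]

theorem Subgroup.Normal.le_normalizer_of_le (hN : N.Normal) (hNK : N ≤ K) :
    N ≤ normalizer K := by
  rw [le_normalizer_iff]
  intro n hn k hk
  have hcomm : k * n⁻¹ * k⁻¹ ∈ K := hNK (hN.conj_mem _ (inv_mem hn) k)
  convert mul_mem (mul_mem (hNK hn) hcomm) hk using 1
  group

theorem normal_of_le_normalizer_of_sup_eq_top (hA : A ≤ normalizer N) (hB : B ≤ normalizer N)
    (hAB : A ⊔ B = ⊤) : N.Normal :=
  normalizer_eq_top_iff.1 (top_le_iff.1 (hAB ▸ sup_le hA hB))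

open scoped Pointwise in
theorem le_inf_sup_of_sup_eq_top [N.Normal] (hAN : A ⊔ N = ⊤) (hNB : N ≤ B) : B ≤ B ⊓ A ⊔ N := by
  intro b hb
  -- Dedekind's rule: `B = B ∩ AN = (B ∩ A) N`.
  rw [← SetLike.mem_coe, mul_normal, inf_mul_assoc _ _ _ hNB, ← mul_normal, hAN]
  exact ⟨hb, trivial⟩

theorem sup_closure_image_eq_of_mul_inv_mem {f : G → G}
    (hf : ∀ x, f x * x⁻¹ ∈ K) (T : Set G) : K ⊔ closure (f '' T) = K ⊔ closure T := by
  apply le_antisymm <;> refine sup_le le_sup_left ((closure_le _).2 ?_)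
  · rintro _ ⟨x, hx, rfl⟩
    simpa using mul_mem (mem_sup_left (hf x)) (mem_sup_right (subset_closure hx))
  · intro x hx
    simpa using mul_mem (mem_sup_left (inv_mem (hf x)))
      (mem_sup_right (subset_closure ⟨x, hx, rfl⟩) : f x ∈ K ⊔ closure (f '' T))

end SubgroupLemmas

section ConjClosure

variable {G : Type*} [Group G]

def conjClosure (D : Subgroup G) (S : Set G) : Subgroup G :=
  closure {x | ∃ d ∈ D, ∃ s ∈ S, d * s * d⁻¹ = x}

variable {D D' K : Subgroup G} {S S' : Set G}

theorem subset_conjClosure : S ⊆ conjClosure D S :=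
  fun s hs => subset_closure ⟨1, one_mem D, s, hs, by simp⟩

theorem closure_le_conjClosure : closure S ≤ conjClosure D S :=
  (closure_le _).2 subset_conjClosure

theorem le_normalizer_conjClosure : D ≤ normalizer (conjClosure D S) := by
  rw [conjClosure, le_normalizer_closure_iff]
  rintro d hd _ ⟨e, he, s, hs, rfl⟩
  exact subset_closure ⟨d * e, mul_mem hd he, s, hs, by group⟩

theorem conjClosure_le (hD : D ≤ normalizer K) (hS : S ⊆ K) : conjClosure D S ≤ K := by
  rw [conjClosure, closure_le]
  rintro _ ⟨d, hd, s, hs, rfl⟩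
  exact le_normalizer_iff.1 hD d hd s (hS hs)

theorem conjClosure_mono (hD : D ≤ D') (hS : S ⊆ S') : conjClosure D S ≤ conjClosure D' S' :=
  conjClosure_le (hD.trans le_normalizer_conjClosure) (hS.trans subset_conjClosure)

theorem exists_ne_top_conjClosure_eq_top [Finite G] (hD : conjClosure D S = ⊤)
    (hS : closure S ≠ ⊤) : ∃ M ≤ D, M ≠ ⊤ ∧ conjClosure M S = ⊤ := by
  by_cases hDtop : D = ⊤
  · subst hDtop
    by_contra! hM
    have hS_le_coatom : ∀ M : Subgroup G, IsCoatom M → S ⊆ M := by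
      intro M hM'
      by_contra hSM
      have hsup : M ⊔ conjClosure M S = ⊤ := hM'.2 _ <| lt_of_le_of_ne le_sup_left fun heq =>
        hSM (subset_conjClosure.trans (heq ▸ le_sup_right))
      have := normal_of_le_normalizer_of_sup_eq_top le_normalizer_conjClosure le_normalizer hsup
      exact hM M le_top hM'.1 (top_le_iff.1 (hD ▸ conjClosure_le le_normalizer_of_normal
        subset_conjClosure))
    have hfrattini : frattini G = ⊤ := top_le_iff.1 <| hD ▸
      conjClosure_le le_normalizer_of_normal fun s hs =>
        mem_iInf.2 fun M => mem_iInf.2 fun hM' => hS_le_coatom M hM' hs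
    exact hS (frattini_nongenerating (by rw [hfrattini, sup_top_eq]))
  · exact ⟨D, le_rfl, hDtop, hD⟩

end ConjClosure

section IsIrredundantGenModulo

variable {H : Type*} [Group H]

structure IsIrredundantGenModulo (C D : Subgroup H) (v : Finset H) : Prop where
  le : C ≤ D
  le_normalizer : D ≤ normalizer C
  sup_eq_top : C ⊔ conjClosure D v = ⊤
  notMem : ∀ h ∈ v, h ∉ C ⊔ conjClosure D ((v : Set H) \ {h})

variable {C D : Subgroup H} {v : Finset H}

theorem IsIrredundantGenModulo.irredundant (hv : IsIrredundantGenModulo C D v) :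
    Irredundant v :=
  fun h hh hmem => hv.notMem h hh (mem_sup_right (closure_le_conjClosure hmem))

theorem IsIrredundantGenModulo.exists_card_lt [Finite H] (hv : IsIrredundantGenModulo C D v)
    (hQ : conjClosure D v ≠ ⊤) :
    ∃ (C' : Subgroup H) (v' : Finset H), IsIrredundantGenModulo C' D v' ∧ v.card < v'.card := by
  classical
  set Q := conjClosure D v
  have hQn : Q.Normal := normal_of_le_normalizer_of_sup_eq_top
    (hv.le.trans le_normalizer_conjClosure) Subgroup.le_normalizer hv.sup_eq_top
  obtain ⟨M, hQM, hMmax⟩ :=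
    Finite.exists_le_maximal (p := fun N : Subgroup H => N.Normal ∧ N ≠ ⊤) ⟨hQn, hQ⟩
  obtain ⟨hMn, hMtop⟩ := hMmax.prop
  obtain ⟨x, hxC, hxM⟩ : ∃ x ∈ C, x ∉ M := SetLike.not_le_iff_exists.1 fun hCM =>
    hMtop (top_le_iff.1 (hv.sup_eq_top ▸ sup_le hCM hQM))
  have hxv : x ∉ v := fun h => hxM (hQM (subset_conjClosure h))
  have hDMC : D ≤ normalizer (M ⊓ C) :=
    (le_inf le_normalizer_of_normal hv.le_normalizer).trans inf_normalizer_le_normalizer_inf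
  refine ⟨M ⊓ C, insert x v, ⟨inf_le_right.trans hv.le, hDMC, ?_, ?_⟩, by
    simp [Finset.card_insert_of_notMem hxv]⟩
  · set X := M ⊓ C ⊔ conjClosure D ↑(insert x v)
    have hQX : Q ≤ X := le_sup_of_le_right (conjClosure_mono le_rfl (by simp))
    have hXn : X.Normal := normal_of_le_normalizer_of_sup_eq_top
      (le_normalizer_sup hDMC le_normalizer_conjClosure) (hQn.le_normalizer_of_le hQX)
      (top_le_iff.1 (hv.sup_eq_top ▸ sup_le_sup_right hv.le Q))
    have hMX : M ≤ X :=
      (le_inf_sup_of_sup_eq_top hv.sup_eq_top hQM).trans (sup_le le_sup_left hQX)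
    by_contra hXtop
    exact hxM (hMmax.eq_of_le ⟨hXn, hXtop⟩ hMX ▸
      mem_sup_right (subset_conjClosure (by simp)))
  · intro h hh hmem
    rcases Finset.mem_insert.1 hh with rfl | hhv
    · refine hxM (sup_le inf_le_left ((conjClosure_mono le_rfl ?_).trans hQM) hmem)
      intro y ⟨hy, hyx⟩
      exact (Finset.mem_insert.1 hy).resolve_left hyx
    · refine hv.notMem h hhv (sup_le (inf_le_right.trans le_sup_left) (conjClosure_le
        (le_normalizer_sup hv.le_normalizer le_normalizer_conjClosure) ?_) hmem)
      rintro y ⟨hy, hyh⟩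
      rcases Finset.mem_insert.1 hy with rfl | hyv
      · exact mem_sup_left hxC
      · exact mem_sup_right (subset_conjClosure ⟨hyv, hyh⟩)

end IsIrredundantGenModulo

section Prod

open scoped Pointwise

variable {G H : Type*} [Group G] [Group H]

theorem notMem_closure_of_leftInverse {P : Type*} [Group P] {f : P →* G} {g : G →* P}
    (hfg : Function.LeftInverse f g) {X : Set P} (hX : ∀ x ∈ X, f x = 1) {T : Set G} {t : G}
    (ht : t ∉ closure (T \ {t})) : g t ∉ closure ((X ∪ g '' T) \ {g t}) := by
  intro hmem
  apply ht
  have himage := mem_map_of_mem f hmem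
  rw [MonoidHom.map_closure, hfg t] at himage
  refine (closure_le _).2 ?_ himage
  rintro _ ⟨p, ⟨hp | ⟨y, hy, rfl⟩, hne⟩, rfl⟩
  · rw [hX p hp]
    exact one_mem _
  · rw [hfg y]
    exact subset_closure ⟨hy, fun hyt => hne (congrArg g hyt)⟩

theorem mRank_add_mRank_le_mRank_prod [Finite G] [Finite H] :
    mRank G + mRank H ≤ mRank (G × H) := by
  classical
  obtain ⟨u, hu, hugen, hucard⟩ := exists_irredundant_card_eq_mRank (G := G)
  obtain ⟨v, hv, hvgen, hvcard⟩ := exists_irredundant_card_eq_mRank (G := H)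
  set w := u.image (MonoidHom.inl G H) ∪ v.image (MonoidHom.inr G H)
  have hw : (w : Set (G × H)) = MonoidHom.inl G H '' u ∪ MonoidHom.inr G H '' v := by
    simp [w]
  have hgen : closure (w : Set (G × H)) = ⊤ := by
    rw [eq_top_iff]
    rintro ⟨g, h⟩ -
    have hg : (g, (1 : H)) ∈ closure (w : Set (G × H)) :=
      closure_mono (hw ▸ Set.subset_union_left)
        (apply_mem_closure_image_of_closure_eq_top (MonoidHom.inl G H) hugen g)
    have hh : ((1 : G), h) ∈ closure (w : Set (G × H)) :=
      closure_mono (hw ▸ Set.subset_union_right)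
        (apply_mem_closure_image_of_closure_eq_top (MonoidHom.inr G H) hvgen h)
    simpa using mul_mem hg hh
  have hirr : Irredundant w := by
    intro p hp
    rw [hw]
    rcases Finset.mem_union.1 hp with hp | hp <;> obtain ⟨x, hx, rfl⟩ := Finset.mem_image.1 hp
    · rw [Set.union_comm]
      exact notMem_closure_of_leftInverse (f := MonoidHom.fst G H) (fun _ => rfl)
        (by rintro _ ⟨y, -, rfl⟩; rfl) (hu x hx)
    · exact notMem_closure_of_leftInverse (f := MonoidHom.snd G H) (fun _ => rfl)
        (by rintro _ ⟨y, -, rfl⟩; rfl) (hv x hx)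
  have hdisj : Disjoint (u.image (MonoidHom.inl G H)) (v.image (MonoidHom.inr G H)) := by
    rw [Finset.disjoint_left]
    rintro _ hx hy
    obtain ⟨g, hg, rfl⟩ := Finset.mem_image.1 hx
    obtain ⟨h, -, hgh⟩ := Finset.mem_image.1 hy
    obtain rfl : g = 1 := by simpa using (congrArg Prod.fst hgh).symm
    exact hu.one_notMem hg
  calc mRank G + mRank H = w.card := by
        rw [Finset.card_union_of_disjoint hdisj,
          Finset.card_image_of_injective (f := MonoidHom.inl G H) u (Prod.mk_left_injective 1),
          Finset.card_image_of_injective (f := MonoidHom.inr G H) v (Prod.mk_right_injective 1),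
          hucard, hvcard]
    _ ≤ mRank (G × H) := card_le_mRank hirr hgen

def Subgroup.diag (D : Subgroup H) : D →* H × D :=
  D.subtype.prod (MonoidHom.id D)

section Diag

variable {D : Subgroup H}

theorem Subgroup.diag_apply (d : D) : D.diag d = ((d : H), d) := rfl

theorem inl_conj_eq_diag_conj (d : D) (x : H) :
    MonoidHom.inl H D (d * x * (d : H)⁻¹) =
      D.diag d * MonoidHom.inl H D x * (D.diag d)⁻¹ := by
  ext <;> simp [Subgroup.diag_apply]

theorem closure_image_inl_union_image_diag {S : Set H} {T : Set D} (hS : conjClosure D S = ⊤)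
    (hT : closure T = ⊤) : closure (MonoidHom.inl H D '' S ∪ D.diag '' T) = ⊤ := by
  set L := closure (MonoidHom.inl H D '' S ∪ D.diag '' T)
  have hdiag : D.diag.range ≤ L := by
    rintro _ ⟨d, rfl⟩
    exact closure_mono Set.subset_union_right (apply_mem_closure_image_of_closure_eq_top _ hT d)
  have hinl : conjClosure D S ≤ L.comap (MonoidHom.inl H D) := by
    refine conjClosure_le (le_normalizer_iff.2 fun d hd x hx => ?_)
      fun x hx => subset_closure (Or.inl ⟨x, hx, rfl⟩)
    rw [mem_comap, inl_conj_eq_diag_conj ⟨d, hd⟩]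
    exact mul_mem (mul_mem (hdiag ⟨_, rfl⟩) hx) (inv_mem (hdiag ⟨_, rfl⟩))
  rw [eq_top_iff]
  rintro ⟨x, d⟩ -
  have hxd : ((x, d) : H × D) = MonoidHom.inl H D (x * (d : H)⁻¹) * D.diag d := by
    ext <;> simp [Subgroup.diag_apply]
  rw [hxd]
  exact mul_mem (hinl (hS ▸ mem_top _)) (hdiag ⟨d, rfl⟩)

theorem inl_notMem_closure_image_inl_union_image_diag {S : Set H} {T : Set D} {x : H}
    (hx : x ∉ conjClosure D (S \ {x})) :
    MonoidHom.inl H D x ∉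
      closure ((MonoidHom.inl H D '' S ∪ D.diag '' T) \ {MonoidHom.inl H D x}) := by
  set P := conjClosure D (S \ {x})
  have hdiagP : D.diag.range ≤ normalizer (P.map (MonoidHom.inl H D)) := by
    refine le_normalizer_iff.2 ?_
    rintro _ ⟨d, rfl⟩ _ ⟨y, hy, rfl⟩
    rw [← inl_conj_eq_diag_conj]
    exact mem_map_of_mem _ (le_normalizer_iff.1 le_normalizer_conjClosure (d : H) d.2 y hy)
  intro hmem
  have hmem' :
      MonoidHom.inl H D x ∈ (P.map (MonoidHom.inl H D) : Set (H × D)) * D.diag.range := by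
    rw [← coe_mul_of_right_le_normalizer_left _ _ hdiagP]
    refine (closure_le _).2 ?_ hmem
    rintro _ ⟨⟨y, hy, rfl⟩ | ⟨d, -, rfl⟩, hne⟩
    · exact mem_sup_left
        (mem_map_of_mem _ (subset_conjClosure ⟨hy, fun hyx => hne (hyx ▸ rfl)⟩))
    · exact mem_sup_right ⟨d, rfl⟩
  obtain ⟨_, ⟨y, hy, rfl⟩, _, ⟨d, rfl⟩, hyd⟩ := hmem'
  obtain rfl : d = 1 := by simpa [Subgroup.diag_apply] using congrArg Prod.snd hyd
  obtain rfl : y = x := by simpa using congrArg Prod.fst hyd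
  exact hx hy

theorem card_add_mRank_le_mRank_prod [Finite H] {v : Finset H} (hv : conjClosure D v = ⊤)
    (hirr : ∀ h ∈ v, h ∉ conjClosure D ((v : Set H) \ {h})) :
    v.card + mRank D ≤ mRank (H × D) := by
  classical
  obtain ⟨a, ha, hagen, hacard⟩ := exists_irredundant_card_eq_mRank (G := D)
  set w := v.image (MonoidHom.inl H D) ∪ a.image D.diag
  have hw : (w : Set (H × D)) = MonoidHom.inl H D '' v ∪ D.diag '' a := by simp [w]
  have hirr_w : Irredundant w := by
    intro p hp
    rw [hw]
    rcases Finset.mem_union.1 hp with hp | hp <;> obtain ⟨x, hx, rfl⟩ := Finset.mem_image.1 hp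
    · exact inl_notMem_closure_image_inl_union_image_diag (hirr x hx)
    · exact notMem_closure_of_leftInverse (f := MonoidHom.snd H D) (fun _ => rfl)
        (by rintro _ ⟨y, -, rfl⟩; rfl) (ha x hx)
  have hdisj : Disjoint (v.image (MonoidHom.inl H D)) (a.image D.diag) := by
    rw [Finset.disjoint_left]
    rintro _ hx hd
    obtain ⟨x, -, rfl⟩ := Finset.mem_image.1 hx
    obtain ⟨d, hd, hdx⟩ := Finset.mem_image.1 hd
    obtain rfl : d = 1 := congrArg Prod.snd hdx
    exact ha.one_notMem hd
  calc v.card + mRank D = w.card := by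
        rw [Finset.card_union_of_disjoint hdisj,
          Finset.card_image_of_injective (f := MonoidHom.inl H D) v (Prod.mk_left_injective 1),
          Finset.card_image_of_injective (f := D.diag) a fun _ _ h => congrArg Prod.snd h, hacard]
    _ ≤ mRank (H × D) :=
      card_le_mRank hirr_w (hw ▸ closure_image_inl_union_image_diag hv hagen)

end Diag

theorem inr_conj_snd (k : G × H) (x : H) :
    MonoidHom.inr G H (k.2 * x * k.2⁻¹) = k * MonoidHom.inr G H x * k⁻¹ := by
  ext <;> simp

theorem map_snd_le_normalizer_comap_inr (K : Subgroup (G × H)) :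
    K.map (MonoidHom.snd G H) ≤ normalizer (K.comap (MonoidHom.inr G H)) := by
  rw [le_normalizer_iff]
  rintro _ ⟨k, hk, rfl⟩ x hx
  rw [mem_comap, MonoidHom.coe_snd, inr_conj_snd]
  exact mul_mem (mul_mem hk hx) (inv_mem hk)

theorem comap_inr_sup_closure_image_inr (K : Subgroup (G × H)) (S : Set H) :
    (K ⊔ closure (MonoidHom.inr G H '' S)).comap (MonoidHom.inr G H) =
      K.comap (MonoidHom.inr G H) ⊔ conjClosure (K.map (MonoidHom.snd G H)) S := by
  set ι := MonoidHom.inr G H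
  set W := K.comap ι ⊔ conjClosure (K.map (MonoidHom.snd G H)) S
  apply le_antisymm
  · have hKW : K ≤ normalizer (W.map ι) := by
      rw [le_normalizer_iff]
      rintro k hk _ ⟨w, hw, rfl⟩
      rw [← inr_conj_snd]
      have hW : K.map (MonoidHom.snd G H) ≤ normalizer W :=
        le_normalizer_sup (map_snd_le_normalizer_comap_inr K) le_normalizer_conjClosure
      exact mem_map_of_mem _ (le_normalizer_iff.1 hW k.2 ⟨k, hk, rfl⟩ w hw)
    have hle : K ⊔ closure (ι '' S) ≤ K ⊔ W.map ι := by
      refine sup_le_sup_left ((closure_le _).2 ?_) K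
      rintro _ ⟨s, hs, rfl⟩
      exact mem_map_of_mem _ (mem_sup_right (subset_conjClosure hs))
    intro h hh
    have hmem : ι h ∈ (K : Set (G × H)) * W.map ι := by
      rw [← coe_mul_of_left_le_normalizer_right _ _ hKW]
      exact hle hh
    obtain ⟨k, hk, _, ⟨w, hw, rfl⟩, hkw⟩ := hmem
    have hk1 : k.1 = 1 := by simpa [ι] using congrArg Prod.fst hkw
    have hkC : k.2 ∈ K.comap ι := by
      rwa [mem_comap, show ι k.2 = k from Prod.ext hk1.symm rfl]
    have hh : h = k.2 * w := by simpa [ι] using (congrArg Prod.snd hkw).symm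
    exact hh ▸ mul_mem (mem_sup_left hkC) hw
  · refine sup_le (comap_mono le_sup_left) (conjClosure_le ?_ fun s hs => ?_)
    · exact (map_mono le_sup_left).trans (map_snd_le_normalizer_comap_inr _)
    · exact mem_sup_right (subset_closure ⟨s, hs, rfl⟩)

theorem exists_isIrredundantGenModulo {K : Subgroup (G × H)}
    (hK : K.map (MonoidHom.fst G H) = ⊤) {B : Finset (G × H)}
    (hgen : K ⊔ closure (B : Set (G × H)) = ⊤)
    (hB : ∀ b ∈ B, b ∉ K ⊔ closure ((B : Set (G × H)) \ {b})) :
    ∃ v : Finset H, IsIrredundantGenModulo (K.comap (MonoidHom.inr G H))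
      (K.map (MonoidHom.snd G H)) v ∧ v.card = B.card := by
  classical
  set C := K.comap (MonoidHom.inr G H)
  set D := K.map (MonoidHom.snd G H)
  have hsurj : ∀ p : G × H, ∃ k ∈ K, k.1 = p.1 := fun p => by
    obtain ⟨k, hk, hk1⟩ := hK.symm ▸ mem_top p.1
    exact ⟨k, hk, hk1⟩
  choose κ hκK hκ1 using hsurj
  set φ : G × H → H := fun p => ((κ p)⁻¹ * p).2
  have hιφ : ∀ p, MonoidHom.inr G H (φ p) = (κ p)⁻¹ * p :=
    fun p => Prod.ext (by simp [hκ1]) rfl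
  have hsup : ∀ T : Set (G × H),
      C ⊔ conjClosure D (φ '' T) = (K ⊔ closure T).comap (MonoidHom.inr G H) := by
    intro T
    rw [← comap_inr_sup_closure_image_inr, Set.image_image]
    simp_rw [hιφ]
    rw [sup_closure_image_eq_of_mul_inv_mem (fun p => by simpa using inv_mem (hκK p))]
  have hφ : ∀ b ∈ B, φ b ∉ C ⊔ conjClosure D (φ '' ((B : Set (G × H)) \ {b})) := by
    intro b hb hmem
    rw [hsup, mem_comap, hιφ] at hmem
    exact hB b hb (by simpa using mul_mem (mem_sup_left (hκK b)) hmem)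
  have hinj : Set.InjOn φ B := by
    intro b hb b' hb' hbb'
    by_contra hne
    exact hφ b hb (hbb' ▸ mem_sup_right
      (subset_conjClosure ⟨b', ⟨hb', Ne.symm hne⟩, rfl⟩))
  refine ⟨B.image φ,
    ⟨fun c hc => ⟨_, hc, rfl⟩, map_snd_le_normalizer_comap_inr K, ?_, ?_⟩,
    Finset.card_image_of_injOn hinj⟩
  · rw [Finset.coe_image, hsup, hgen, comap_top]
  · intro _ hh hmem
    obtain ⟨b, hb, rfl⟩ := Finset.mem_image.1 hh
    refine hφ b hb (sup_le_sup_left (conjClosure_mono le_rfl ?_) C hmem)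
    rintro _ ⟨hy, hne⟩
    obtain ⟨b', hb', rfl⟩ := Finset.mem_image.1 hy
    exact ⟨b', ⟨hb', fun hbb' => hne (congrArg φ hbb')⟩, rfl⟩

theorem mRank_prod_le [Finite G] [Finite H]
    (hH : ∀ (C D : Subgroup H) (v : Finset H),
      IsIrredundantGenModulo C D v → v.card ≤ mRank H) :
    mRank (G × H) ≤ mRank G + mRank H := by
  classical
  refine mRank_le fun s hs hgen => ?_
  obtain ⟨A, hAs, hAcard, hAgen⟩ := exists_subset_card_le_mRank (MonoidHom.fst G H)
    (s := s) (by rw [← MonoidHom.map_closure, hgen, map_top_of_surjective]; exact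
      fun g => ⟨(g, 1), rfl⟩)
  set K := closure (A : Set (G × H))
  have hKgen : K ⊔ closure (↑(s \ A) : Set (G × H)) = ⊤ := by
    rw [← Subgroup.closure_union, ← Finset.coe_union, Finset.union_sdiff_of_subset hAs, hgen]
  have hKirr : ∀ b ∈ s \ A, b ∉ K ⊔ closure (↑(s \ A) \ {b}) := by
    intro b hb hmem
    obtain ⟨hbs, hbA⟩ := Finset.mem_sdiff.1 hb
    rw [← Subgroup.closure_union] at hmem
    refine hs b hbs (closure_mono ?_ hmem)
    rintro x (hx | ⟨hx, hxb⟩)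
    · exact ⟨hAs hx, fun hxb => hbA (hxb ▸ hx)⟩
    · exact ⟨(Finset.mem_sdiff.1 hx).1, hxb⟩
  obtain ⟨v, hv, hvcard⟩ := exists_isIrredundantGenModulo
    (by rw [MonoidHom.map_closure, hAgen]) hKgen hKirr
  have := hH _ _ v hv
  rw [← Finset.card_sdiff_add_card_eq_card hAs]
  omega

end Prod

theorem IsIrredundantGenModulo.card_le_mRank {H : Type*} [Group H] [Finite H]
    {C D : Subgroup H} {v : Finset H} (hv : IsIrredundantGenModulo C D v) :
    v.card ≤ mRank H := by
  by_cases hgen : closure (v : Set H) = ⊤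
  · exact _root_.card_le_mRank hv.irredundant hgen
  by_cases hQ : conjClosure D v = ⊤
  · obtain ⟨M, hMD, hM, hMv⟩ := exists_ne_top_conjClosure_eq_top hQ hgen
    have hlower := card_add_mRank_le_mRank_prod hMv fun h hh hmem =>
      hv.notMem h hh (mem_sup_right (conjClosure_mono hMD le_rfl hmem))
    have hupper := mRank_prod_le (G := H) (H := M) fun _ _ _ hv' => hv'.card_le_mRank
    omega
  · obtain ⟨C', v', hv', hlt⟩ := hv.exists_card_lt hQ
    exact hlt.le.trans hv'.card_le_mRank
termination_by (Nat.card H, Nat.card H - v.card)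
decreasing_by
  · exact Prod.Lex.left _ _
      (lt_of_le_of_ne M.card_le_card_group (mt (card_eq_iff_eq_top M).1 hM))
  · exact Prod.Lex.right _ (Nat.sub_lt_sub_left (hlt.trans_le (Finset.card_le_nat_card _)) hlt)

theorem stmt8 (G H : Type*) [Group G] [Group H] [Finite G] [Finite H] :
    mRank (G × H) = mRank G + mRank H :=
  le_antisymm (mRank_prod_le fun _ _ _ hv => hv.card_le_mRank) mRank_add_mRank_le_mRank_prod
end

section
/- For finite groups G and H, i(G × H) = i(G) + i(H), where i denotes the maximal size of an irredundant subset. -/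
section Stmt9Aux

open Subgroup

variable {K : Type*} [Group K]

private lemma stmt9_one_not_mem {s : Finset K} (hs : Irredundant s) : (1 : K) ∉ s :=
  fun h => hs 1 h (Subgroup.one_mem _)

private lemma stmt9_card_le [Finite K] {s : Finset K} (hs : Irredundant s) :
    s.card ≤ iRank K := by
  classical
  haveI := Fintype.ofFinite K
  rw [iRank]
  refine le_csSup ⟨Fintype.card K, ?_⟩ ⟨s, hs, rfl⟩
  rintro n ⟨t, -, rfl⟩
  exact Finset.card_le_univ t

private lemma stmt9_achieved (K : Type*) [Group K] [Finite K] :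
    ∃ s : Finset K, Irredundant s ∧ s.card = iRank K := by
  classical
  haveI := Fintype.ofFinite K
  have hne : {n | ∃ s : Finset K, Irredundant s ∧ s.card = n}.Nonempty :=
    ⟨0, ∅, by intro g hg; simp at hg, rfl⟩
  have hbdd : BddAbove {n | ∃ s : Finset K, Irredundant s ∧ s.card = n} := by
    refine ⟨Fintype.card K, ?_⟩
    rintro n ⟨t, -, rfl⟩
    exact Finset.card_le_univ t
  have := Nat.sSup_mem hne hbdd
  rw [iRank]
  exact this

/-- An "irredundant family" indexed by a finset gives an irredundant finset of
the same cardinality, hence bounds `iRank`. -/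
private lemma stmt9_family_card_le [Finite K] {ι : Type*} (s : Finset ι) (f : ι → K)
    (hf : ∀ i ∈ s, f i ∉ Subgroup.closure (f '' ((s : Set ι) \ {i}))) :
    s.card ≤ iRank K := by
  classical
  have hinj : Set.InjOn f ↑s := by
    intro i hi j hj hij
    by_contra hne
    exact hf j hj (Subgroup.subset_closure ⟨i, ⟨hi, by simpa using hne⟩, hij⟩)
  have hcard : (s.image f).card = s.card := Finset.card_image_of_injOn hinj
  have hirr : Irredundant (s.image f) := by
    intro g hg
    obtain ⟨i, hi, rfl⟩ := Finset.mem_image.1 hg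
    intro hmem
    refine hf i hi ((Subgroup.closure_mono ?_) hmem)
    rintro x ⟨hx, hxne⟩
    rw [Finset.coe_image] at hx
    obtain ⟨j, hj, rfl⟩ := hx
    exact ⟨j, ⟨hj, fun h => hxne (by rw [h]; exact Set.mem_singleton _)⟩, rfl⟩
  calc s.card = (s.image f).card := hcard.symm
    _ ≤ iRank K := stmt9_card_le hirr

private lemma stmt9_ge (G H : Type*) [Group G] [Group H] [Finite G] [Finite H] :
    iRank G + iRank H ≤ iRank (G × H) := by
  classical
  obtain ⟨U, hU, hUcard⟩ := stmt9_achieved G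
  obtain ⟨V, hV, hVcard⟩ := stmt9_achieved H
  set W : Finset (G × H) :=
    U.image (fun g => ((g, 1) : G × H)) ∪ V.image (fun h => ((1, h) : G × H)) with hWdef
  have hinjU : Function.Injective (fun g : G => ((g, 1) : G × H)) :=
    fun a b hab => congrArg Prod.fst hab
  have hinjV : Function.Injective (fun h : H => ((1, h) : G × H)) :=
    fun a b hab => congrArg Prod.snd hab
  have hdisj : Disjoint (U.image (fun g => ((g, 1) : G × H)))
      (V.image (fun h => ((1, h) : G × H))) := by
    rw [Finset.disjoint_left]
    rintro x hx1 hx2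
    obtain ⟨g, hg, rfl⟩ := Finset.mem_image.1 hx1
    obtain ⟨h, hh, heq⟩ := Finset.mem_image.1 hx2
    have hg1 : g = 1 := (congrArg Prod.fst heq).symm
    rw [hg1] at hg
    exact stmt9_one_not_mem hU hg
  have hWcard : W.card = U.card + V.card := by
    rw [hWdef, Finset.card_union_of_disjoint hdisj,
      Finset.card_image_of_injective _ hinjU, Finset.card_image_of_injective _ hinjV]
  have hWirr : Irredundant W := by
    intro w hw hmem
    rcases Finset.mem_union.1 hw with hw1 | hw1
    · obtain ⟨g, hg, rfl⟩ := Finset.mem_image.1 hw1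
      have h1 : ((g, (1 : H)) : G × H).1 ∈
          Subgroup.map (MonoidHom.fst G H) (Subgroup.closure ((W : Set (G × H)) \ {(g, 1)})) :=
        Subgroup.mem_map_of_mem _ hmem
      rw [MonoidHom.map_closure, MonoidHom.coe_fst] at h1
      have hle : Subgroup.closure (Prod.fst '' ((W : Set (G × H)) \ {(g, 1)})) ≤
          Subgroup.closure ((U : Set G) \ {g}) := by
        rw [Subgroup.closure_le]
        rintro x ⟨y, ⟨hyW, hyne⟩, rfl⟩
        rcases Finset.mem_union.1 (Finset.mem_coe.1 hyW) with hy | hy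
        · obtain ⟨g', hg', rfl⟩ := Finset.mem_image.1 hy
          have hgne : g' ≠ g := fun h => hyne (by rw [h]; rfl)
          exact Subgroup.subset_closure ⟨hg', by simpa using hgne⟩
        · obtain ⟨h', hh', rfl⟩ := Finset.mem_image.1 hy
          exact (Subgroup.closure _).one_mem
      exact hU g hg (hle h1)
    · obtain ⟨h, hh, rfl⟩ := Finset.mem_image.1 hw1
      have h1 : (((1 : G), h) : G × H).2 ∈
          Subgroup.map (MonoidHom.snd G H) (Subgroup.closure ((W : Set (G × H)) \ {(1, h)})) :=
        Subgroup.mem_map_of_mem _ hmem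
      rw [MonoidHom.map_closure, MonoidHom.coe_snd] at h1
      have hle : Subgroup.closure (Prod.snd '' ((W : Set (G × H)) \ {(1, h)})) ≤
          Subgroup.closure ((V : Set H) \ {h}) := by
        rw [Subgroup.closure_le]
        rintro x ⟨y, ⟨hyW, hyne⟩, rfl⟩
        rcases Finset.mem_union.1 (Finset.mem_coe.1 hyW) with hy | hy
        · obtain ⟨g', hg', rfl⟩ := Finset.mem_image.1 hy
          exact (Subgroup.closure _).one_mem
        · obtain ⟨h', hh', rfl⟩ := Finset.mem_image.1 hy
          have hhne : h' ≠ h := fun hh2 => hyne (by rw [hh2]; rfl)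
          exact Subgroup.subset_closure ⟨hh', by simpa using hhne⟩
      exact hV h hh (hle h1)
  calc iRank G + iRank H = W.card := by rw [hWcard, hUcard, hVcard]
    _ ≤ iRank (G × H) := stmt9_card_le hWirr

private lemma stmt9_le (G H : Type*) [Group G] [Group H] [Finite G] [Finite H] :
    iRank (G × H) ≤ iRank G + iRank H := by
  classical
  obtain ⟨s, hs, hscard⟩ := stmt9_achieved (G × H)
  rw [← hscard]
  -- Φ P : all elements of s outside P have first component in Subgroup.closure of fst '' P
  have hsmem : s ∈ s.powerset.filter
      (fun T : Finset (G × H) => ∀ q ∈ s, q ∉ T → q.1 ∈ Subgroup.closure (Prod.fst '' (↑T : Set (G × H)))) := by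
    rw [Finset.mem_filter, Finset.mem_powerset]
    exact ⟨le_refl s, fun q hq hq' => absurd hq hq'⟩
  obtain ⟨P, hPmem, hPmin⟩ := Finset.exists_min_image _ Finset.card ⟨s, hsmem⟩
  rw [Finset.mem_filter, Finset.mem_powerset] at hPmem
  obtain ⟨hPs, hPΦ⟩ := hPmem
  -- minimality gives irredundancy of first components of P
  have hgood : ∀ p ∈ P, p.1 ∉ Subgroup.closure (Prod.fst '' ((P : Set (G × H)) \ {p})) := by
    intro p hp hmem
    have hmem' : p.1 ∈ Subgroup.closure (Prod.fst '' ((P.erase p : Finset (G × H)) : Set (G × H))) := by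
      rw [Finset.coe_erase]; exact hmem
    have hle : Subgroup.closure (Prod.fst '' (P : Set (G × H))) ≤
        Subgroup.closure (Prod.fst '' ((P.erase p : Finset (G × H)) : Set (G × H))) := by
      rw [Subgroup.closure_le]
      rintro x ⟨y, hy, rfl⟩
      by_cases hyp : y = p
      · subst hyp; exact hmem'
      · exact Subgroup.subset_closure ⟨y, Finset.mem_coe.2 (Finset.mem_erase.2 ⟨hyp, Finset.mem_coe.1 hy⟩), rfl⟩
    have herase : P.erase p ∈ s.powerset.filter
        (fun T : Finset (G × H) => ∀ q ∈ s, q ∉ T → q.1 ∈ Subgroup.closure (Prod.fst '' (↑T : Set (G × H)))) := by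
      rw [Finset.mem_filter, Finset.mem_powerset]
      refine ⟨(Finset.erase_subset _ _).trans hPs, ?_⟩
      intro q hq hq'
      by_cases hqp : q = p
      · subst hqp; exact hmem'
      · have hqP : q ∉ P := fun hqP => hq' (Finset.mem_erase.2 ⟨hqp, hqP⟩)
        exact hle (hPΦ q hq hqP)
    have h1 := hPmin _ herase
    have h2 : (P.erase p).card < P.card := Finset.card_erase_lt_of_mem hp
    omega
  have hPcard : P.card ≤ iRank G := stmt9_family_card_le P Prod.fst hgood
  -- H side
  set Q : Finset (G × H) := s \ P with hQdef
  have hQs : ∀ q ∈ Q, q ∈ s ∧ q ∉ P := fun q hq => Finset.mem_sdiff.1 hq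
  have hcmem : ∀ q ∈ Q, ∃ c, c ∈ Subgroup.closure ((P : Finset (G × H)) : Set (G × H)) ∧ c.1 = q.1 := by
    intro q hq
    obtain ⟨hq1, hq2⟩ := hQs q hq
    have h1 := hPΦ q hq1 hq2
    have h2 : q.1 ∈ Subgroup.map (MonoidHom.fst G H) (Subgroup.closure ((P : Finset (G × H)) : Set (G × H))) := by
      rw [MonoidHom.map_closure, MonoidHom.coe_fst]
      exact h1
    obtain ⟨c, hc1, hc2⟩ := Subgroup.mem_map.1 h2
    exact ⟨c, hc1, hc2⟩
  choose cfun hc1 hc2 using hcmem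
  have hfam : ∀ q ∈ Q,
      (fun q => if hq : q ∈ Q then ((cfun q hq)⁻¹ * q).2 else 1) q ∉
        Subgroup.closure ((fun q => if hq : q ∈ Q then ((cfun q hq)⁻¹ * q).2 else 1) ''
          ((Q : Set (G × H)) \ {q})) := by
    set f : G × H → H := fun q => if hq : q ∈ Q then ((cfun q hq)⁻¹ * q).2 else 1 with hfdef
    have hkey : ∀ q (hq : q ∈ Q), (((1 : G), f q) : G × H) = (cfun q hq)⁻¹ * q := by
      intro q hq
      have h1 : ((cfun q hq)⁻¹ * q).1 = 1 := by
        rw [Prod.fst_mul, Prod.fst_inv, hc2 q hq, inv_mul_cancel]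
      have h2 : f q = ((cfun q hq)⁻¹ * q).2 := by
        rw [hfdef]; exact dif_pos hq
      rw [Prod.ext_iff]
      exact ⟨h1.symm, h2⟩
    intro q hq hmem
    obtain ⟨hq1, hq2⟩ := hQs q hq
    set Cq := Subgroup.closure ((s : Set (G × H)) \ {q}) with hCqdef
    have hPle : Subgroup.closure ((P : Finset (G × H)) : Set (G × H)) ≤ Cq := by
      apply Subgroup.closure_mono
      intro x hx
      refine ⟨Finset.mem_coe.2 (hPs (Finset.mem_coe.1 hx)), ?_⟩
      intro hxq
      rw [Set.mem_singleton_iff] at hxq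
      exact hq2 (hxq ▸ Finset.mem_coe.1 hx)
    have h3 : (((1 : G), f q) : G × H) ∈
        Subgroup.map (MonoidHom.inr G H) (Subgroup.closure (f '' ((Q : Set (G × H)) \ {q}))) := by
      refine ⟨f q, hmem, ?_⟩
      rfl
    rw [MonoidHom.map_closure] at h3
    have hle2 : Subgroup.closure ((MonoidHom.inr G H) '' (f '' ((Q : Set (G × H)) \ {q}))) ≤ Cq := by
      rw [Subgroup.closure_le]
      rintro y ⟨z, ⟨v, ⟨hvQ, hvne⟩, rfl⟩, rfl⟩
      have hvQ' : v ∈ Q := Finset.mem_coe.1 hvQ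
      have hinr : (MonoidHom.inr G H) (f v) = (cfun v hvQ')⁻¹ * v := by
        have := hkey v hvQ'
        simpa [MonoidHom.inr_apply] using this
      rw [hinr]
      refine Cq.mul_mem (Cq.inv_mem (hPle (hc1 v hvQ'))) ?_
      refine Subgroup.subset_closure ⟨Finset.mem_coe.2 (hQs v hvQ').1, ?_⟩
      simpa using hvne
    have h4 : (((1 : G), f q) : G × H) ∈ Cq := hle2 h3
    have h5 : q ∈ Cq := by
      have h6 : cfun q hq * (((1 : G), f q) : G × H) ∈ Cq :=
        Cq.mul_mem (hPle (hc1 q hq)) h4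
      rw [hkey q hq, mul_inv_cancel_left] at h6
      exact h6
    exact hs q hq1 h5
  have hQcard : Q.card ≤ iRank H :=
    stmt9_family_card_le Q (fun q => if hq : q ∈ Q then ((cfun q hq)⁻¹ * q).2 else 1) hfam
  have hsum : (s \ P).card + P.card = s.card := Finset.card_sdiff_add_card_eq_card hPs
  have hQeq : Q.card = (s \ P).card := by rw [hQdef]
  omega

end Stmt9Aux

theorem stmt9 (G H : Type*) [Group G] [Group H] [Finite G] [Finite H] :
    iRank (G × H) = iRank G + iRank H :=
  le_antisymm (stmt9_le G H) (stmt9_ge G H)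
end

section
/- For the cyclic group Z_n (n ≥ 1), m(Z_n) = i(Z_n) = ν(n), where ν(n) is the number of distinct primes dividing n. -/
/-!
In a finite cyclic group an element `x` lies in a subgroup `H` iff `orderOf x ∣ Nat.card H`.
So if `s` is irredundant, every `g ∈ s` has a prime power `p ^ k` dividing its order but not the
order of the subgroup generated by `s \ {g}`. Two elements `g ≠ h` cannot share the prime `p`:
if `k_g ≤ k_h`, then `p ^ k_g` divides the order of `h`, which lies in the subgroup generated by
`s \ {g}`. Hence `g ↦ p` is injective into the prime factors of `n = Nat.card G`. Conversely, for
a generator `a` the elements `a ^ (n / p ^ v_p(n))` of order `p ^ v_p(n)` form an irredundant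
generating set: all but the one for `p` are killed by the power map `x ↦ x ^ (n / p ^ v_p(n))`.
-/

open Subgroup

theorem Nat.ordProj_dvd_ordCompl_of_ne {n p q : ℕ} (hp : p.Prime) (hq : q.Prime) (hpq : p ≠ q) :
    ordProj[q] n ∣ ordCompl[p] n :=
  Nat.dvd_ordCompl_of_dvd_not_dvd (Nat.ordProj_dvd n q) fun h =>
    hpq ((Nat.prime_dvd_prime_iff_eq hp hq).mp (hp.dvd_of_dvd_pow h))

theorem Nat.not_ordProj_dvd_ordCompl {n p : ℕ} (hp : p ∈ n.primeFactors) :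
    ¬ ordProj[p] n ∣ ordCompl[p] n := by
  obtain ⟨hp, hpn, hn⟩ := Nat.mem_primeFactors.mp hp
  exact fun h => Nat.not_dvd_ordCompl hp hn ((Nat.dvd_ordProj_of_dvd hn hp hpn).trans h)

theorem Nat.dvd_of_forall_ordProj_dvd {n m : ℕ} (hn : n ≠ 0)
    (h : ∀ p ∈ n.primeFactors, ordProj[p] n ∣ m) : n ∣ m := by
  refine (Nat.dvd_iff_prime_pow_dvd_dvd m n).mpr fun p k hp hpk => ?_
  rcases k.eq_zero_or_pos with rfl | hk
  · exact one_dvd m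
  have hpn : p ∣ n := (dvd_pow_self p hk.ne').trans hpk
  exact ((hp.pow_dvd_iff_dvd_ordProj hn).mp hpk).trans
    (h p (Nat.mem_primeFactors.mpr ⟨hp, hpn, hn⟩))

theorem orderOf_pow_ordCompl {G : Type*} [Monoid G] (a : G) (p : ℕ) :
    orderOf (a ^ ordCompl[p] (orderOf a)) = ordProj[p] (orderOf a) := by
  rcases eq_or_ne (orderOf a) 0 with h | h
  · simp [h]
  rw [orderOf_pow_of_dvd (Nat.ordCompl_pos p h).ne' (Nat.ordCompl_dvd _ p),
    Nat.div_div_self (Nat.ordProj_dvd _ p) h]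

section Cyclic

variable {G : Type*} [CommGroup G] [IsCyclic G] [Finite G]

theorem IsCyclic.mem_iff_orderOf_dvd_card (H : Subgroup G) {x : G} :
    x ∈ H ↔ orderOf x ∣ Nat.card H := by
  have hker : (powMonoidHom (Nat.card H) : G →* G).ker = H := by
    refine (Subgroup.eq_of_le_of_card_ge (fun y hy => ?_) ?_).symm
    · exact orderOf_dvd_iff_pow_eq_one.mp (H.orderOf_dvd_natCard hy)
    · rw [IsCyclic.card_powMonoidHom_ker, Nat.gcd_eq_right (card_subgroup_dvd_card H)]
  nth_rw 1 [← hker]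
  rw [MonoidHom.mem_ker, powMonoidHom_apply, orderOf_dvd_iff_pow_eq_one]

theorem Irredundant.exists_prime_pow_dvd_orderOf_not_dvd_card {s : Finset G}
    (hs : Irredundant s) {g : G} (hg : g ∈ s) :
    ∃ p k : ℕ, p.Prime ∧ p ^ k ∣ orderOf g ∧
      ¬ p ^ k ∣ Nat.card (closure ((s : Set G) \ {g})) := by
  have h := hs g hg
  rw [IsCyclic.mem_iff_orderOf_dvd_card, Nat.dvd_iff_prime_pow_dvd_dvd] at h
  push Not at h
  exact h

theorem Irredundant.card_le_card_primeFactors {s : Finset G} (hs : Irredundant s) :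
    s.card ≤ (Nat.card G).primeFactors.card := by
  choose! P K hP hdvd hndvd using
    fun g (hg : g ∈ s) => hs.exists_prime_pow_dvd_orderOf_not_dvd_card hg
  have hK : ∀ g ∈ s, K g ≠ 0 := fun g hg h => hndvd g hg (by simp [h])
  have hlt : ∀ g ∈ s, ∀ h ∈ s, g ≠ h → P g = P h → K h < K g := by
    intro g hg h hh hgh hP
    by_contra! hle
    refine hndvd g hg ((pow_dvd_pow _ hle).trans ?_)
    rw [hP]
    exact (hdvd h hh).trans (Subgroup.orderOf_dvd_natCard _
      (subset_closure ⟨hh, fun e => hgh (Set.mem_singleton_iff.mp e).symm⟩))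
  refine Finset.card_le_card_of_injOn P (fun g hg => ?_) (fun g hg h hh hPgh => ?_)
  · exact Nat.mem_primeFactors.mpr ⟨hP g hg, (dvd_pow_self _ (hK g hg)).trans
      ((hdvd g hg).trans (orderOf_dvd_natCard g)), Nat.card_pos.ne'⟩
  · by_contra hgh
    exact (hlt g hg h hh hgh hPgh).not_gt (hlt h hh g hg (Ne.symm hgh) hPgh.symm)

end Cyclic

section PrimaryPowers

variable {G : Type*} [CommGroup G]

theorem pow_ordCompl_mem_ker_iff {a : G} {p q : ℕ} (hp : p ∈ (orderOf a).primeFactors)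
    (hq : q ∈ (orderOf a).primeFactors) :
    a ^ ordCompl[q] (orderOf a) ∈ (powMonoidHom (ordCompl[p] (orderOf a)) : G →* G).ker ↔
      q ≠ p := by
  rw [MonoidHom.mem_ker, powMonoidHom_apply, ← orderOf_dvd_iff_pow_eq_one, orderOf_pow_ordCompl]
  refine ⟨fun h hqp => Nat.not_ordProj_dvd_ordCompl hp (hqp ▸ h), fun hqp => ?_⟩
  exact Nat.ordProj_dvd_ordCompl_of_ne (Nat.prime_of_mem_primeFactors hp)
    (Nat.prime_of_mem_primeFactors hq) (Ne.symm hqp)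

variable [DecidableEq G]

noncomputable def primaryPowers (a : G) : Finset G :=
  (orderOf a).primeFactors.image fun p => a ^ ordCompl[p] (orderOf a)

theorem card_primaryPowers (a : G) :
    (primaryPowers a).card = (orderOf a).primeFactors.card := by
  refine Finset.card_image_of_injOn fun p hp q hq hpq => ?_
  by_contra hne
  have h := (pow_ordCompl_mem_ker_iff hp hq).mpr (Ne.symm hne)
  exact (pow_ordCompl_mem_ker_iff hp hp).mp (hpq ▸ h) rfl

theorem irredundant_primaryPowers (a : G) : Irredundant (primaryPowers a) := by
  intro g hg
  obtain ⟨p, hp, rfl⟩ := Finset.mem_image.mp hg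
  have hle : closure ((primaryPowers a : Set G) \ {a ^ ordCompl[p] (orderOf a)}) ≤
      (powMonoidHom (ordCompl[p] (orderOf a)) : G →* G).ker := by
    rw [closure_le]
    rintro _ ⟨hx, hne⟩
    obtain ⟨q, hq, rfl⟩ := Finset.mem_image.mp hx
    exact (pow_ordCompl_mem_ker_iff hp hq).mpr fun h => hne (h ▸ rfl)
  exact fun h => (pow_ordCompl_mem_ker_iff hp hp).mp (hle h) rfl

theorem closure_primaryPowers [IsCyclic G] [Finite G] {a : G} (ha : orderOf a = Nat.card G) :
    closure (primaryPowers a : Set G) = ⊤ := by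
  set H := closure (primaryPowers a : Set G)
  have hcard : Nat.card G ∣ Nat.card H := by
    refine Nat.dvd_of_forall_ordProj_dvd Nat.card_pos.ne' fun p hp => ?_
    rw [← ha] at hp ⊢
    rw [← orderOf_pow_ordCompl, ← IsCyclic.mem_iff_orderOf_dvd_card]
    exact subset_closure (Finset.mem_image_of_mem _ hp)
  exact eq_top_iff.mpr fun x _ =>
    (IsCyclic.mem_iff_orderOf_dvd_card H).mpr ((orderOf_dvd_natCard x).trans hcard)

end PrimaryPowers

section Rank

variable (G : Type*) [CommGroup G] [IsCyclic G] [Finite G]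

theorem IsCyclic.exists_irredundant_closure_eq_top :
    ∃ s : Finset G, Irredundant s ∧ closure (s : Set G) = ⊤ ∧
      s.card = (Nat.card G).primeFactors.card := by
  classical
  obtain ⟨a, ha⟩ := IsCyclic.exists_ofOrder_eq_natCard (α := G)
  exact ⟨primaryPowers a, irredundant_primaryPowers a, closure_primaryPowers ha,
    ha ▸ card_primaryPowers a⟩

theorem IsCyclic.mRank_eq : mRank G = (Nat.card G).primeFactors.card := by
  obtain ⟨s, hirr, htop, hcard⟩ := IsCyclic.exists_irredundant_closure_eq_top G
  refine IsGreatest.csSup_eq ⟨⟨s, hirr, htop, hcard⟩, ?_⟩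
  rintro _ ⟨t, ht, -, rfl⟩
  exact ht.card_le_card_primeFactors

theorem IsCyclic.iRank_eq : iRank G = (Nat.card G).primeFactors.card := by
  obtain ⟨s, hirr, -, hcard⟩ := IsCyclic.exists_irredundant_closure_eq_top G
  refine IsGreatest.csSup_eq ⟨⟨s, hirr, hcard⟩, ?_⟩
  rintro _ ⟨t, ht, rfl⟩
  exact ht.card_le_card_primeFactors

end Rank

theorem stmt10 (n : ℕ) (hn : 1 ≤ n) :
    mRank (Multiplicative (ZMod n)) = n.primeFactors.card ∧
    iRank (Multiplicative (ZMod n)) = n.primeFactors.card := by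
  have : NeZero n := ⟨by omega⟩
  exact ⟨by simpa using IsCyclic.mRank_eq (Multiplicative (ZMod n)),
    by simpa using IsCyclic.iRank_eq (Multiplicative (ZMod n))⟩
end

section
/- Let G be a group and {g_1, ..., g_n} an irredundant generating set of G. For each i choose a maximal subgroup K_i of G containing ⟨g_1, ..., ĝ_i, ..., g_n⟩. Then the family {K_1, ..., K_n} is in general position. -/
theorem stmt14 {G : Type*} [Group G] (n : ℕ) (g : Fin n → G)
    (hinj : Function.Injective g)
    (hirr : ∀ i, g i ∉ Subgroup.closure (g '' {j | j ≠ i}))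
    (hgen : Subgroup.closure (Set.range g) = ⊤)
    (K : Fin n → Subgroup G)
    (hK : ∀ i, IsCoatom (K i) ∧ Subgroup.closure (g '' {j | j ≠ i}) ≤ K i) :
    GenPos K := by
  have hnot : ∀ j, g j ∉ K j := by
    intro j hj
    have hle : Subgroup.closure (Set.range g) ≤ K j := by
      rw [Subgroup.closure_le]
      rintro _ ⟨i, rfl⟩
      by_cases h : i = j
      · subst h; exact hj
      · exact (hK j).2 (Subgroup.subset_closure ⟨i, h, rfl⟩)
    rw [hgen] at hle
    exact (hK j).1.1 (top_le_iff.mp hle)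
  have hmem : ∀ i j : Fin n, i ≠ j → g i ∈ K j := fun i j h =>
    (hK j).2 (Subgroup.subset_closure ⟨i, h, rfl⟩)
  intro I J hIJ
  obtain ⟨j₀, hj₀J, hj₀I⟩ := Finset.exists_of_ssubset hIJ
  rw [SetLike.lt_iff_le_and_exists]
  constructor
  · exact le_iInf₂ fun i hi => iInf₂_le i (hIJ.subset hi)
  · refine ⟨g j₀, ?_, ?_⟩
    · simp only [Subgroup.mem_iInf]
      intro i hi
      exact hmem j₀ i (fun h => hj₀I (h ▸ hi))
    · intro h
      simp only [Subgroup.mem_iInf] at h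
      exact hnot j₀ (h j₀ hj₀J)
end

section
/- For any finite group G, m(G) ≤ MaxDim(G) ≤ i(G). -/
/-! Both inequalities go through families `x : ι → G`, `M : ι → Subgroup G` with
`x i ∈ M j ↔ i ≠ j`. Such a family puts the `M i` in general position, and makes `x`
irredundant, since the subgroup generated by all `x i` with `i ≠ j` lies in `M j`.
Conversely, general position yields such `x` by picking `x j` in `⋂_{i ≠ j} M i \ M j`;
and for an irredundant generating set `s`, a maximal subgroup `M g` above
`⟨s \ {g}⟩` (a proper subgroup) does the job with `x g = g`. -/

def SeparatedBy {G ι : Type*} [Group G] (M : ι → Subgroup G) (x : ι → G) : Prop :=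
  ∀ i j, x i ∈ M j ↔ i ≠ j

section SeparatedBy

variable {G ι : Type*} [Group G] {M : ι → Subgroup G} {x : ι → G}

theorem SeparatedBy.mem (h : SeparatedBy M x) {i j : ι} (hij : i ≠ j) : x i ∈ M j :=
  (h i j).2 hij

theorem SeparatedBy.notMem (h : SeparatedBy M x) (i : ι) : x i ∉ M i :=
  fun hi => (h i i).1 hi rfl

theorem SeparatedBy.injective (h : SeparatedBy M x) : Function.Injective x := by
  intro i j hij
  by_contra hne
  exact h.notMem j (hij ▸ h.mem hne)

theorem SeparatedBy.comp {κ : Type*} (h : SeparatedBy M x) {e : κ → ι}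
    (he : Function.Injective e) : SeparatedBy (M ∘ e) (x ∘ e) :=
  fun i j => (h (e i) (e j)).trans he.ne_iff

theorem SeparatedBy.genPos (h : SeparatedBy M x) : GenPos M := by
  intro I J hIJ
  obtain ⟨j, hjJ, hjI⟩ := Finset.exists_of_ssubset hIJ
  refine lt_of_le_of_ne (le_iInf₂ fun i hi => iInf₂_le i (hIJ.1 hi)) fun heq => ?_
  have hjI' : x j ∈ ⨅ i ∈ I, M i := Subgroup.mem_iInf.2 fun i =>
    Subgroup.mem_iInf.2 fun hi => h.mem (ne_of_mem_of_not_mem hi hjI).symm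
  rw [← heq] at hjI'
  exact h.notMem j (Subgroup.mem_iInf.1 (Subgroup.mem_iInf.1 hjI' j) hjJ)

theorem GenPos.exists_separatedBy [Finite ι] (hM : GenPos M) : ∃ x, SeparatedBy M x := by
  have := Fintype.ofFinite ι
  classical
  have hsep : ∀ j, ∃ y, (∀ i, i ≠ j → y ∈ M i) ∧ y ∉ M j := by
    intro j
    obtain ⟨y, hy, hyj⟩ := SetLike.exists_of_lt <|
      hM (Finset.univ.erase j) Finset.univ (Finset.erase_ssubset (Finset.mem_univ j))
    simp only [Subgroup.mem_iInf, Finset.mem_erase, Finset.mem_univ, and_true] at hy hyj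
    refine ⟨y, hy, fun hy' => hyj fun i _ => ?_⟩
    rcases eq_or_ne i j with rfl | hij
    · exact hy'
    · exact hy i hij
  choose y hy hyj using hsep
  exact ⟨y, fun i j => ⟨fun hi hij => hyj j (hij ▸ hi), fun hij => hy i j hij.symm⟩⟩

theorem SeparatedBy.irredundant_map [Fintype ι] (h : SeparatedBy M x) :
    Irredundant (Finset.univ.map ⟨x, h.injective⟩) := by
  simp only [Irredundant, Finset.mem_map, Finset.mem_univ, true_and, Function.Embedding.coeFn_mk,
    forall_exists_index, forall_apply_eq_imp_iff]
  intro j hj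
  refine h.notMem j (Subgroup.closure_le _ |>.2 ?_ hj)
  rintro _ ⟨hy, hyj⟩
  simp only [Finset.coe_map, Function.Embedding.coeFn_mk, Finset.coe_univ, Set.image_univ,
    Set.mem_range] at hy
  obtain ⟨i, rfl⟩ := hy
  exact h.mem fun hij => hyj (hij ▸ rfl)

end SeparatedBy

theorem Irredundant.exists_isCoatom_separatedBy {G : Type*} [Group G] [IsCoatomic (Subgroup G)]
    {s : Finset G} (hs : Irredundant s) (hgen : Subgroup.closure (s : Set G) = ⊤) :
    ∃ M : s → Subgroup G, (∀ g, IsCoatom (M g)) ∧ SeparatedBy M (↑) := by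
  have hproper : ∀ g : s, Subgroup.closure ((s : Set G) \ {(g : G)}) ≠ ⊤ :=
    fun g htop => hs g g.2 (htop ▸ Subgroup.mem_top _)
  choose M hM hle using fun g => (eq_top_or_exists_le_coatom _).resolve_left (hproper g)
  refine ⟨M, hM, fun g h => ⟨fun hg hgh => (hM h).1 ?_, fun hgh => hle h ?_⟩⟩
  · subst hgh
    rw [eq_top_iff, ← hgen, Subgroup.closure_le]
    intro y hy
    rcases eq_or_ne y g with rfl | hyg
    · exact hg
    · exact hle g (Subgroup.subset_closure ⟨hy, hyg⟩)
  · exact Subgroup.subset_closure ⟨g.2, fun hg => hgh (Subtype.ext hg)⟩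

section Finite

variable {G : Type*} [Group G] [Finite G]

theorem bddAbove_maxDim_set :
    BddAbove {k | ∃ M : Fin k → Subgroup G, (∀ j, IsCoatom (M j)) ∧ GenPos M} := by
  refine ⟨Nat.card G, ?_⟩
  rintro k ⟨M, -, hM⟩
  obtain ⟨x, hx⟩ := hM.exists_separatedBy
  simpa using Nat.card_le_card_of_injective x hx.injective

theorem bddAbove_iRank_set : BddAbove {n | ∃ s : Finset G, Irredundant s ∧ s.card = n} := by
  have := Fintype.ofFinite G
  exact ⟨Fintype.card G, fun n ⟨s, _, hn⟩ => hn ▸ s.card_le_univ⟩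

theorem card_le_maxDim {s : Finset G} (hs : Irredundant s)
    (hgen : Subgroup.closure (s : Set G) = ⊤) : s.card ≤ MaxDim G := by
  obtain ⟨M, hM, hsep⟩ := hs.exists_isCoatom_separatedBy hgen
  let e : Fin s.card ≃ s := s.equivFin.symm
  exact le_csSup bddAbove_maxDim_set
    ⟨M ∘ e, fun j => hM (e j), (hsep.comp e.injective).genPos⟩

theorem card_le_iRank {ι : Type*} [Fintype ι] {M : ι → Subgroup G} (hM : GenPos M) :
    Fintype.card ι ≤ iRank G := by
  obtain ⟨x, hx⟩ := hM.exists_separatedBy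
  exact le_csSup bddAbove_iRank_set ⟨_, hx.irredundant_map, by simp⟩

end Finite

theorem stmt15 {G : Type*} [Group G] [Finite G] :
    mRank G ≤ MaxDim G ∧ MaxDim G ≤ iRank G := by
  constructor
  · exact csSup_le' fun n ⟨s, hs, hgen, hn⟩ => hn ▸ card_le_maxDim hs hgen
  · exact csSup_le' fun k ⟨M, _, hM⟩ => by simpa using card_le_iRank hM
end

section
/- Let G be a finite group with m(G) = n ≥ 1. Then there exist n distinct maximal subgroups M_1, ..., M_n of G with i(M_j) ≥ n − 1 for each j. -/
theorem stmt16 {G : Type*} [Group G] [Finite G] (n : ℕ)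
    (hm : mRank G = n) (hn : 1 ≤ n) :
    ∃ M : Fin n → Subgroup G, Function.Injective M ∧
      ∀ j, IsCoatom (M j) ∧ n - 1 ≤ iRank (M j) := by
  classical
  have : Fintype G := Fintype.ofFinite G
  set S := {k | ∃ s : Finset G, Irredundant s ∧ Subgroup.closure (s : Set G) = ⊤ ∧ s.card = k}
    with hS
  have hmS : mRank G = sSup S := rfl
  have hbdd : BddAbove S := ⟨Fintype.card G, by rintro k ⟨s, -, -, rfl⟩; exact s.card_le_univ⟩
  have hne : S.Nonempty := by
    by_contra h
    rw [Set.not_nonempty_iff_eq_empty] at h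
    rw [hmS, h, csSup_empty] at hm
    simp at hm
    omega
  have hmem : n ∈ S := by rw [← hm, hmS]; exact Nat.sSup_mem hne hbdd
  obtain ⟨s, hirr, hgen, hcard⟩ := hmem
  let g : Fin n → G := fun j => (s.equivFin.symm (Fin.cast hcard.symm j) : G)
  have hgmem : ∀ j, g j ∈ s := fun j => (s.equivFin.symm (Fin.cast hcard.symm j)).2
  have ginj : Function.Injective g := fun a b h => by
    have := s.equivFin.symm.injective (Subtype.ext h)
    exact Fin.ext (congrArg Fin.val this : _)
  -- closure of the rest is proper
  have hproper : ∀ j, Subgroup.closure ((s.erase (g j) : Finset G) : Set G) ≠ ⊤ := by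
    intro j htop
    have : g j ∈ Subgroup.closure ((s.erase (g j) : Finset G) : Set G) := by
      rw [htop]; trivial
    rw [Finset.coe_erase] at this
    exact hirr (g j) (hgmem j) this
  have hex : ∀ j, ∃ M : Subgroup G, IsCoatom M ∧
      Subgroup.closure ((s.erase (g j) : Finset G) : Set G) ≤ M := by
    intro j
    rcases eq_top_or_exists_le_coatom (Subgroup.closure ((s.erase (g j) : Finset G) : Set G)) with
      h | ⟨M, hM, hle⟩
    · exact absurd h (hproper j)
    · exact ⟨M, hM, hle⟩
  choose M hMco hMle using hex
  -- g j ∉ M j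
  have hgnot : ∀ j, g j ∉ M j := by
    intro j hin
    apply (hMco j).1
    rw [eq_top_iff, ← hgen]
    rw [Subgroup.closure_le]
    intro x hx
    rcases eq_or_ne x (g j) with rfl | hne'
    · exact hin
    · exact hMle j (Subgroup.subset_closure (Finset.mem_erase.mpr ⟨hne', hx⟩))
  refine ⟨M, ?_, ?_⟩
  · intro j₁ j₂ hMeq
    by_contra hjj
    have hgne : g j₂ ≠ g j₁ := fun h => hjj (ginj h).symm
    have : g j₂ ∈ M j₁ :=
      hMle j₁ (Subgroup.subset_closure (Finset.mem_erase.mpr ⟨hgne, hgmem j₂⟩))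
    rw [hMeq] at this
    exact hgnot j₂ this
  · intro j
    refine ⟨hMco j, ?_⟩
    -- build the irredundant subset of M j
    have hsub : ∀ x ∈ s.erase (g j), x ∈ M j := fun x hx =>
      hMle j (Subgroup.subset_closure hx)
    let t : Finset ↥(M j) := (s.erase (g j)).attach.map
      ⟨fun x => ⟨x.1, hsub x.1 x.2⟩, fun a b h => Subtype.ext (Subtype.mk_eq_mk.mp h)⟩
    have hval : ∀ a ∈ t, (a : G) ∈ s.erase (g j) := by
      intro a ha
      simp only [t, Finset.mem_map, Finset.mem_attach, Function.Embedding.coeFn_mk,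
        true_and] at ha
      obtain ⟨x, hx⟩ := ha
      rw [← hx]
      exact x.2
    have htcard : t.card = n - 1 := by
      simp only [t, Finset.card_map, Finset.card_attach]
      rw [Finset.card_erase_of_mem (hgmem j), hcard]
    have htirr : Irredundant t := by
      intro a ha hacl
      have h1 : (a : G) ∈ Subgroup.map (M j).subtype
          (Subgroup.closure ((t : Set ↥(M j)) \ {a})) :=
        ⟨a, hacl, rfl⟩
      rw [MonoidHom.map_closure] at h1
      have h2 : ((M j).subtype '' ((t : Set ↥(M j)) \ {a})) ⊆ (s : Set G) \ {(a : G)} := by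
        rintro y ⟨x, ⟨hxt, hxa⟩, rfl⟩
        refine ⟨Finset.mem_of_mem_erase (hval x hxt), ?_⟩
        simp only [Set.mem_singleton_iff]
        intro h
        exact hxa (Subtype.ext h)
      have h3 : (a : G) ∈ Subgroup.closure ((s : Set G) \ {(a : G)}) :=
        Subgroup.closure_mono h2 h1
      exact hirr (a : G) (Finset.mem_of_mem_erase (hval a ha)) h3
    have : Fintype ↥(M j) := Fintype.ofFinite _
    have hbdd' : BddAbove {k | ∃ u : Finset ↥(M j), Irredundant u ∧ u.card = k} :=
      ⟨Fintype.card ↥(M j), by rintro k ⟨u, -, rfl⟩; exact u.card_le_univ⟩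
    exact le_csSup hbdd' ⟨t, htirr, htcard⟩
end

section
/- Let F = {H_1, ..., H_k} be a family of subgroups of a finite group G in general position. Then for any subset I ⊆ {1,...,k}, k ≤ i(H_I) + |I|, where H_I = ∩_{j∈I} H_j. In particular, k ≤ i(H_ℓ) + 1 for each ℓ. -/
theorem stmt17 {G : Type*} [Group G] [Finite G] (k : ℕ)
    (H : Fin k → Subgroup G) (hgp : GenPos H) :
    (∀ I : Finset (Fin k), k ≤ iRank ↥(⨅ j ∈ I, H j) + I.card) ∧
    ∀ ℓ : Fin k, k ≤ iRank (H ℓ) + 1 := by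
  classical
  -- choose witnesses
  have hex : ∀ j : Fin k, ∃ g : G, (∀ m, m ≠ j → g ∈ H m) ∧ g ∉ H j := by
    intro j
    have hlt := hgp (Finset.univ.erase j) Finset.univ
      (Finset.erase_ssubset (Finset.mem_univ j))
    obtain ⟨g, hg1, hg2⟩ := SetLike.exists_of_lt hlt
    have hg1' : ∀ m, m ≠ j → g ∈ H m := by
      intro m hm
      have := hg1
      simp only [Subgroup.mem_iInf, Finset.mem_erase, Finset.mem_univ] at this
      exact this m ⟨hm, trivial⟩
    refine ⟨g, hg1', ?_⟩
    intro hgj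
    apply hg2
    simp only [Subgroup.mem_iInf, Finset.mem_univ]
    intro m _
    by_cases hmj : m = j
    · exact hmj ▸ hgj
    · exact hg1' m hmj
  choose g hgmem hgnot using hex
  have hginj : Function.Injective g := by
    intro j1 j2 h
    by_contra hne
    exact hgnot j2 (h ▸ hgmem j1 j2 (Ne.symm hne))
  have key : ∀ I : Finset (Fin k), k ≤ iRank ↥(⨅ j ∈ I, H j) + I.card := by
    intro I
    set K : Subgroup G := ⨅ j ∈ I, H j with hK
    have hmemK : ∀ j : Fin k, j ∉ I → g j ∈ K := by
      intro j hj
      simp only [hK, Subgroup.mem_iInf]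
      intro m hm
      exact hgmem j m (fun h => hj (h ▸ hm))
    -- the irredundant set
    let f : {x // x ∈ Iᶜ} → ↥K := fun x =>
      ⟨g x.1, hmemK x.1 (Finset.mem_compl.mp x.2)⟩
    have hfinj : Function.Injective f := by
      intro a b h
      have : g a.1 = g b.1 := congrArg Subtype.val h
      exact Subtype.ext (hginj this)
    let s : Finset ↥K := Iᶜ.attach.image f
    have hcard : s.card = Iᶜ.card := by
      rw [Finset.card_image_of_injective _ hfinj, Finset.card_attach]
    have hirr : Irredundant s := by
      intro x hx hxc
      obtain ⟨a, _, rfl⟩ := Finset.mem_image.mp hx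
      -- map down to G
      have hmap : (f a : G) ∈ Subgroup.closure (Subgroup.subtype K '' ((s : Set ↥K) \ {f a})) := by
        rw [← MonoidHom.map_closure]
        exact ⟨f a, hxc, rfl⟩
      have hle : Subgroup.closure (Subgroup.subtype K '' ((s : Set ↥K) \ {f a})) ≤ H a.1 := by
        apply Subgroup.closure_le _ |>.mpr
        rintro y ⟨z, ⟨hzs, hzne⟩, rfl⟩
        obtain ⟨b, _, rfl⟩ := Finset.mem_image.mp hzs
        have hbne : b.1 ≠ a.1 := by
          intro h
          exact hzne (by simp [show b = a from Subtype.ext h])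
        exact hgmem b.1 a.1 hbne.symm
      exact hgnot a.1 (hle hmap)
    -- bound sSup from below
    haveI : Fintype ↥K := Fintype.ofFinite _
    have hbdd : BddAbove {n | ∃ s : Finset ↥K, Irredundant s ∧ s.card = n} := by
      refine ⟨Fintype.card ↥K, ?_⟩
      rintro n ⟨t, _, rfl⟩
      exact Finset.card_le_univ t
    have hmem : Iᶜ.card ∈ {n | ∃ s : Finset ↥K, Irredundant s ∧ s.card = n} :=
      ⟨s, hirr, hcard⟩
    have hsup : Iᶜ.card ≤ iRank ↥K := le_csSup hbdd hmem
    have hccard : Iᶜ.card = k - I.card := by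
      rw [Finset.card_compl, Fintype.card_fin]
    have hIle : I.card ≤ k := by
      simpa using Finset.card_le_univ I
    calc k = (k - I.card) + I.card := (Nat.sub_add_cancel hIle).symm
      _ ≤ iRank ↥K + I.card := by
          apply Nat.add_le_add_right
          rw [← hccard]; exact hsup
  refine ⟨key, ?_⟩
  intro ℓ
  have h := key {ℓ}
  have heq : (⨅ j ∈ ({ℓ} : Finset (Fin k)), H j) = H ℓ := by simp
  rw [heq, Finset.card_singleton] at h
  exact h
end
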